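/- Let 0 < λ ≤ 1 and suppose W ⊆ V is a nonempty subset equipped with nonnegative weights (a_w)_{w∈W} such that W integrates φ_i exactly for every index i with |μ_i| ≥ λ. Then for every natural number k, writing S_k = {x ∈ V : d(x,W) ≤ k} (which contains W and is therefore nonempty), one has 1/#S_k − 1/n ≤ λ^{2k} · Σ_{w∈W} a_w². -/

import Mathlib

/-!
Put `b = Σ_{w ∈ W} a_w δ_w` and `g = M^k b`. Since `M` only connects adjacent vertices, `g` is
supported in `S_k`, so Cauchy–Schwarz gives `(Σ_v g v)² ≤ #S_k ‖g‖²`. Exactness on the constant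
eigenvector says `Σ_w a_w = 1`, and since the orthonormal eigenbasis is also a basis of left
eigenvectors, `M` preserves `Σ_v`, so `Σ_v g v = 1`. In the eigenbasis the coefficients of `g` are
`μ_i^k ⟨b, φ_i⟩`; exactness on the other eigenvectors with `|μ_i| ≥ λ` (which sum to zero) kills
their coefficients, so by Parseval `‖g‖² ≤ 1/n + λ^{2k} ‖b‖²`.
-/

open Finset Matrix

theorem inv_sub_le_of_one_le_mul {K : Type*} [Field K] [LinearOrder K] [IsStrictOrderedRing K]
    {s c x : K} (hs : 0 ≤ s) (h : 1 ≤ s * (c + x)) : s⁻¹ - c ≤ x := by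
  have hs' : 0 < s := hs.lt_of_ne fun h0 => by rw [← h0, zero_mul] at h; linarith
  rw [sub_le_iff_le_add', inv_le_iff_one_le_mul₀' hs']
  exact h

section

variable {ι V : Type*} [Fintype ι] [Fintype V]

theorem sum_sq_pow_mul_le {μ c : ι → ℝ} {i₀ : ι} (hμ₀ : μ i₀ = 1) {lam : ℝ}
    (hc : ∀ i ≠ i₀, lam ≤ |μ i| → c i = 0) (k : ℕ) :
    ∑ i, (μ i ^ k * c i) ^ 2 ≤ c i₀ ^ 2 + lam ^ (2 * k) * ∑ i, c i ^ 2 := by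
  classical
  have hlam : 0 ≤ lam ^ (2 * k) := (even_two_mul k).pow_nonneg lam
  calc ∑ i, (μ i ^ k * c i) ^ 2
      ≤ ∑ i, ((if i = i₀ then c i ^ 2 else 0) + lam ^ (2 * k) * c i ^ 2) := by
        gcongr with i
        by_cases hi : i = i₀
        · subst hi
          simp only [hμ₀, one_pow, one_mul, if_true]
          exact le_add_of_nonneg_right (mul_nonneg hlam (sq_nonneg _))
        by_cases hμ : lam ≤ |μ i|
        · simp [hc i hi hμ]
        · have : (μ i ^ k) ^ 2 ≤ lam ^ (2 * k) := by
            rw [← pow_mul, mul_comm k 2, pow_mul, pow_mul, ← sq_abs (μ i)]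
            gcongr
            exact (not_le.mp hμ).le
          rw [if_neg hi, zero_add, mul_pow]
          exact mul_le_mul_of_nonneg_right this (sq_nonneg _)
    _ = c i₀ ^ 2 + lam ^ (2 * k) * ∑ i, c i ^ 2 := by
        rw [sum_add_distrib, sum_ite_eq', if_pos (mem_univ _), mul_sum]

theorem sq_sum_le_ncard_mul_dotProduct_self {f : V → ℝ} {S : Set V}
    (hf : ∀ x, f x ≠ 0 → x ∈ S) : (∑ x, f x) ^ 2 ≤ S.ncard * f ⬝ᵥ f := by
  classical
  have hsum : ∑ x ∈ S.toFinset, f x = ∑ x, f x :=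
    sum_subset (subset_univ _) fun x _ hx => by_contra fun h => hx (by simpa using hf x h)
  calc (∑ x, f x) ^ 2 ≤ #S.toFinset * ∑ x ∈ S.toFinset, f x ^ 2 := hsum ▸ sq_sum_le_card_mul_sum_sq
    _ ≤ S.ncard * f ⬝ᵥ f := by
      rw [Set.ncard_eq_toFinset_card', dotProduct]
      gcongr
      simpa only [sq] using sum_le_univ_sum_of_nonneg fun x => sq_nonneg (f x)

namespace Matrix

variable {R : Type*}

theorem indicator_dotProduct [NonUnitalNonAssocSemiring R] (W : Finset V) (a f : V → R) :
    (W : Set V).indicator a ⬝ᵥ f = ∑ w ∈ W, a w * f w := by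
  simp_rw [dotProduct, ← Set.indicator_mul_left]
  exact sum_indicator_subset _ (subset_univ W)

theorem dotProduct_self_mulVec_of_transpose_mul_eq_one [CommSemiring R] [DecidableEq V]
    {Q : Matrix ι V R} (hQ : Qᵀ * Q = 1) (x : V → R) :
    (Q *ᵥ x) ⬝ᵥ (Q *ᵥ x) = x ⬝ᵥ x := by
  rw [dotProduct_comm, dotProduct_mulVec, ← mulVec_transpose, mulVec_mulVec, hQ, one_mulVec]

theorem mul_eq_diagonal_mul_of_mul_transpose [Semiring R] [DecidableEq ι] [DecidableEq V]
    {Q : Matrix ι V R} {M : Matrix V V R} {μ : ι → R} (hQQ : Q * Qᵀ = 1) (hQ : Qᵀ * Q = 1)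
    (hM : M * Qᵀ = Qᵀ * diagonal μ) : Q * M = diagonal μ * Q :=
  calc Q * M = Q * (M * Qᵀ) * Q := by
        rw [Matrix.mul_assoc, Matrix.mul_assoc, hQ, Matrix.mul_one]
    _ = diagonal μ * Q := by rw [hM, ← Matrix.mul_assoc, hQQ, Matrix.one_mul]

theorem mulVec_pow_mulVec_of_mul_eq_diagonal_mul [CommSemiring R] [DecidableEq ι]
    [DecidableEq V] {Q : Matrix ι V R} {M : Matrix V V R} {μ : ι → R}
    (hQM : Q * M = diagonal μ * Q) (b : V → R) (k : ℕ) :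
    Q *ᵥ (M ^ k *ᵥ b) = μ ^ k * Q *ᵥ b := by
  induction k with
  | zero => simp
  | succ k ih =>
    funext i
    rw [pow_succ', ← mulVec_mulVec, mulVec_mulVec, hQM, ← mulVec_mulVec, ih, mulVec_diagonal]
    simp only [Pi.mul_apply, Pi.pow_apply, pow_succ']
    ring

theorem mul_transpose_of_eq_of_mulVec_eq_smul [CommSemiring R] [DecidableEq ι]
    {M : Matrix V V R} {φ : ι → V → R} {μ : ι → R} (h : ∀ i, M *ᵥ φ i = μ i • φ i) :
    M * (of φ)ᵀ = (of φ)ᵀ * diagonal μ := by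
  ext v i
  rw [mul_diagonal]
  exact (congrFun (h i) v).trans (mul_comm _ _)

theorem sum_pow_mulVec_eq_sum [CommRing R] [IsDomain R] [DecidableEq ι] [DecidableEq V]
    {Q : Matrix ι V R} {M : Matrix V V R} {μ : ι → R} (hQM : Q * M = diagonal μ * Q) {i₀ : ι}
    (hμ₀ : μ i₀ = 1) {c : R} (hc : c ≠ 0) (hQ₀ : ∀ v, Q i₀ v = c) (b : V → R) (k : ℕ) :
    ∑ v, (M ^ k *ᵥ b) v = ∑ v, b v := by
  have hrow : ∀ x : V → R, (Q *ᵥ x) i₀ = c * ∑ v, x v := fun x => by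
    simp only [mulVec, dotProduct, hQ₀, ← mul_sum]
  have := congrFun (mulVec_pow_mulVec_of_mul_eq_diagonal_mul hQM b k) i₀
  rw [Pi.mul_apply, Pi.pow_apply, hμ₀, one_pow, one_mul, hrow, hrow] at this
  exact mul_left_cancel₀ hc this

theorem dotProduct_self_pow_mulVec_le [DecidableEq ι] [DecidableEq V]
    {Q : Matrix ι V ℝ} {M : Matrix V V ℝ} {μ : ι → ℝ} (hQ : Qᵀ * Q = 1)
    (hQM : Q * M = diagonal μ * Q) {i₀ : ι} (hμ₀ : μ i₀ = 1) {lam : ℝ} {b : V → ℝ}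
    (hb : ∀ i ≠ i₀, lam ≤ |μ i| → (Q *ᵥ b) i = 0) (k : ℕ) :
    (M ^ k *ᵥ b) ⬝ᵥ (M ^ k *ᵥ b) ≤ (Q *ᵥ b) i₀ ^ 2 + lam ^ (2 * k) * b ⬝ᵥ b := by
  rw [← dotProduct_self_mulVec_of_transpose_mul_eq_one hQ,
    mulVec_pow_mulVec_of_mul_eq_diagonal_mul hQM,
    ← dotProduct_self_mulVec_of_transpose_mul_eq_one hQ b]
  simpa only [dotProduct, Pi.mul_apply, Pi.pow_apply, sq] using sum_sq_pow_mul_le hμ₀ hb k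

end Matrix

namespace SimpleGraph

variable {R : Type*} [Semiring R] [DecidableEq V] (G : SimpleGraph V) {M : Matrix V V R}

theorem exists_walk_length_eq_of_pow_apply_ne_zero (hM : ∀ u v, M u v ≠ 0 → G.Adj u v) {m : ℕ}
    {x y : V} (h : (M ^ m) x y ≠ 0) : ∃ p : G.Walk x y, p.length = m := by
  induction m generalizing x with
  | zero =>
    obtain rfl : x = y := by by_contra hxy; simp [one_apply_ne hxy] at h
    exact ⟨.nil, rfl⟩
  | succ m ih =>
    rw [pow_succ', mul_apply] at h
    obtain ⟨u, -, hu⟩ := exists_ne_zero_of_sum_ne_zero h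
    obtain ⟨p, hp⟩ := ih (right_ne_zero_of_mul hu)
    exact ⟨.cons (hM x u (left_ne_zero_of_mul hu)) p, by simp [hp]⟩

theorem exists_dist_le_of_pow_mulVec_ne_zero (hM : ∀ u v, M u v ≠ 0 → G.Adj u v) {m : ℕ}
    {b : V → R} {x : V} (h : (M ^ m *ᵥ b) x ≠ 0) : ∃ w, b w ≠ 0 ∧ G.dist x w ≤ m := by
  obtain ⟨w, -, hw⟩ := exists_ne_zero_of_sum_ne_zero h
  obtain ⟨p, hp⟩ := G.exists_walk_length_eq_of_pow_apply_ne_zero hM (left_ne_zero_of_mul hw)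
  exact ⟨w, right_ne_zero_of_mul hw, hp ▸ dist_le p⟩

end SimpleGraph

end

theorem graphical_design_sharp_neighborhood_bound_general
    {V : Type*} [Fintype V]
    (G : SimpleGraph V) [DecidableRel G.Adj]
    (n : ℕ) (hn : Fintype.card V = n) (hn1 : 0 < n)
    (M : Matrix V V ℝ)
    (hM : ∀ u v : V, M u v = if G.Adj u v then ((G.degree v : ℝ))⁻¹ else 0)
    (φ : Fin n → V → ℝ) (μ : Fin n → ℝ)
    (horth : ∀ i j : Fin n, ∑ v : V, φ i v * φ j v = if i = j then 1 else 0)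
    (heig : ∀ i : Fin n, M.mulVec (φ i) = μ i • φ i)
    (hφ0 : ∀ v : V, φ ⟨0, hn1⟩ v = (Real.sqrt n)⁻¹)
    (hμ0 : μ ⟨0, hn1⟩ = 1)
    (lam : ℝ) (hlam1 : lam ≤ 1)
    (W : Finset V)
    (a : V → ℝ)
    (hint : ∀ i : Fin n, lam ≤ |μ i| →
      ∑ w ∈ W, a w * φ i w = (1 / (n : ℝ)) * ∑ v : V, φ i v) :
    ∀ k : ℕ,
      (({x : V | ∃ w ∈ W, G.dist x w ≤ k}.ncard : ℝ))⁻¹ - 1 / (n : ℝ) ≤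
        lam ^ (2 * k) * ∑ w ∈ W, (a w) ^ 2 := by
  intro k
  classical
  set i₀ : Fin n := ⟨0, hn1⟩
  set Q : Matrix (Fin n) V ℝ := Matrix.of φ
  have hQQ : Q * Qᵀ = 1 := by ext i j; simp [Q, mul_apply, one_apply, horth]
  have hQ : Qᵀ * Q = 1 := (mul_eq_one_comm_of_equiv (Fintype.equivFinOfCardEq hn).symm).mp hQQ
  have hQM : Q * M = diagonal μ * Q :=
    mul_eq_diagonal_mul_of_mul_transpose hQQ hQ (mul_transpose_of_eq_of_mulVec_eq_smul heig)
  have hsqrt : Real.sqrt n ≠ 0 := by positivity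
  have hsum_φ : ∀ i ≠ i₀, ∑ v, φ i v = 0 := fun i hi => by
    simpa [hφ0, ← sum_mul, hi, hsqrt] using horth i i₀
  have hweight : ∑ w ∈ W, a w = 1 := by
    have := hint i₀ (by simpa [hμ0] using hlam1)
    simp only [hφ0, ← sum_mul, sum_const, card_univ, hn, nsmul_eq_mul] at this
    field_simp at this
    exact this
  set b : V → ℝ := (W : Set V).indicator a
  have hcoeff : ∀ i, (Q *ᵥ b) i = ∑ w ∈ W, a w * φ i w := fun i =>
    (dotProduct_comm _ _).trans (indicator_dotProduct W a (φ i))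
  have hc₀ : (Q *ᵥ b) i₀ = (Real.sqrt n)⁻¹ := by
    simp only [hcoeff, hφ0, ← sum_mul, hweight, one_mul]
  have hc : ∀ i ≠ i₀, lam ≤ |μ i| → (Q *ᵥ b) i = 0 := fun i hi hμi => by
    rw [hcoeff, hint i hμi, hsum_φ i hi, mul_zero]
  have hmass : ∑ v, (M ^ k *ᵥ b) v = 1 := by
    rw [sum_pow_mulVec_eq_sum hQM hμ0 (inv_ne_zero hsqrt) hφ0,
      sum_indicator_subset a (subset_univ W), hweight]
  have hsupp : ∀ x, (M ^ k *ᵥ b) x ≠ 0 → x ∈ {x : V | ∃ w ∈ W, G.dist x w ≤ k} := fun x hx => by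
    obtain ⟨w, hw, hdist⟩ := G.exists_dist_le_of_pow_mulVec_ne_zero
      (fun u v huv => by_contra fun h => huv (by simp [hM, h])) hx
    exact ⟨w, Set.mem_of_indicator_ne_zero hw, hdist⟩
  have hb : b ⬝ᵥ b = ∑ w ∈ W, a w ^ 2 := by
    rw [indicator_dotProduct]
    exact sum_congr rfl fun w hw => by simp [b, hw, sq]
  have hcs := sq_sum_le_ncard_mul_dotProduct_self hsupp
  have hnorm := dotProduct_self_pow_mulVec_le hQ hQM hμ0 hc k
  rw [hmass, one_pow] at hcs
  rw [hc₀, hb, inv_pow, Real.sq_sqrt (Nat.cast_nonneg n), ← one_div] at hnorm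
  exact inv_sub_le_of_one_le_mul (Nat.cast_nonneg _) (hcs.trans (by gcongr))

/-- Same setting as Statement 0.  For every natural number `k`, writing
`S_k = {x ∈ V : d(x,W) ≤ k}` (which contains `W` and is therefore nonempty), one has
`1/#S_k − 1/n ≤ λ^{2k} · Σ_{w∈W} a_w²`. -/
theorem graphical_design_sharp_neighborhood_bound
    {V : Type*} [Fintype V] [DecidableEq V]
    (G : SimpleGraph V) [DecidableRel G.Adj]
    (hconn : G.Connected)
    (n : ℕ) (hn : Fintype.card V = n) (hn1 : 0 < n)
    (hdeg : ∀ v : V, 0 < G.degree v)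
    (M : Matrix V V ℝ)
    (hM : ∀ u v : V, M u v = if G.Adj u v then ((G.degree v : ℝ))⁻¹ else 0)
    (φ : Fin n → V → ℝ) (μ : Fin n → ℝ)
    (horth : ∀ i j : Fin n, ∑ v : V, φ i v * φ j v = if i = j then 1 else 0)
    (heig : ∀ i : Fin n, M.mulVec (φ i) = μ i • φ i)
    (hφ0 : ∀ v : V, φ ⟨0, hn1⟩ v = (Real.sqrt n)⁻¹)
    (hμ0 : μ ⟨0, hn1⟩ = 1)
    (lam : ℝ) (hlam : 0 < lam) (hlam1 : lam ≤ 1)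
    (W : Finset V) (hW : W.Nonempty)
    (a : V → ℝ) (ha : ∀ w ∈ W, 0 ≤ a w)
    (hint : ∀ i : Fin n, lam ≤ |μ i| →
      ∑ w ∈ W, a w * φ i w = (1 / (n : ℝ)) * ∑ v : V, φ i v) :
    ∀ k : ℕ,
      (({x : V | ∃ w ∈ W, G.dist x w ≤ k}.ncard : ℝ))⁻¹ - 1 / (n : ℝ) ≤
        lam ^ (2 * k) * ∑ w ∈ W, (a w) ^ 2 :=
  graphical_design_sharp_neighborhood_bound_general G n hn hn1 M hM φ μ horth heig hφ0 hμ0 lam hlam1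
    W a hint
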